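/- Let V be a cartesian monoidal category (monoidal structure given by finite products) with finite limits and small coproducts that are universal and disjoint, and let M be a V-enriched category whose type of objects is a set (small). Consider the three morphisms π₁, π₂, comp : ∐_{(a,b,c)∈M₀³} M(b,c) × M(a,b) → ∐_{(a,b)∈M₀²} M(a,b), where on the (a,b,c)-component: π₁ is the first projection M(b,c) × M(a,b) → M(b,c) followed by the coprojection indexed by (b,c); π₂ is the second projection followed by the coprojection indexed by (a,b); and comp is the enriched composition M(b,c) × M(a,b) → M(a,c) followed by the coprojection indexed by (a,c). Let E together with ε : E → ∐_{(a,b,c)} M(b,c) × M(a,b) be the joint equalizer of π₁, π₂ and comp (the limit of the diagram consisting of these three parallel arrows). For each object a of M, let 𐌌_a be the equalizer of the identity of M(a,a) and the morphism M(a,a) → M(a,a) given by the diagonal ⟨id, id⟩ : M(a,a) → M(a,a) × M(a,a) followed by the enriched composition ∘_{aaa} : M(a,a) × M(a,a) → M(a,a). Then E is isomorphic to the coproduct ∐_{a∈M₀} 𐌌_a. -/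

import Mathlib

open CategoryTheory CategoryTheory.Limits

universe v u

variable (V : Type u) [Category.{v} V] [HasFiniteLimits V] [HasCoproducts.{v} V]

/-- Coproducts are universal: the coproduct of the pullbacks of the coprojections
along any morphism `f : Y ⟶ ∐ x` maps isomorphically onto `Y`. -/
def UniversalCoproducts : Prop :=
  ∀ ⦃I : Type v⦄ (x : I → V) (Y : V) (f : Y ⟶ ∐ x)
    (y : I → V) (p : ∀ i, y i ⟶ Y) (q : ∀ i, y i ⟶ x i),
    (∀ i, IsPullback (q i) (p i) (Sigma.ι x i) f) → IsIso (Sigma.desc p)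

/-- Coproducts are disjoint: the pullback of two distinct coprojections is the
initial object. -/
def DisjointCoproducts [HasInitial V] : Prop :=
  ∀ ⦃I : Type v⦄ (x : I → V) (i j : I), i ≠ j →
    IsPullback (initial.to (x i)) (initial.to (x j)) (Sigma.ι x i) (Sigma.ι x j)

/-- A category enriched over the cartesian monoidal structure of `V` (the
monoidal structure given by finite products), with a small type of objects. -/
structure EnrichedCat where
  Obj : Type v
  Hom : Obj → Obj → V
  eId : ∀ a, (⊤_ V) ⟶ Hom a a
  comp : ∀ a b c, Hom b c ⨯ Hom a b ⟶ Hom a c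
  id_comp : ∀ a b,
    (prod.leftUnitor (Hom a b)).inv ≫ Limits.prod.map (eId b) (𝟙 (Hom a b)) ≫
      comp a b b = 𝟙 (Hom a b)
  comp_id : ∀ a b,
    (prod.rightUnitor (Hom a b)).inv ≫ Limits.prod.map (𝟙 (Hom a b)) (eId a) ≫
      comp a a b = 𝟙 (Hom a b)
  assoc : ∀ a b c d,
    Limits.prod.map (comp b c d) (𝟙 (Hom a b)) ≫ comp a b d =
      (prod.associator (Hom c d) (Hom b c) (Hom a b)).hom ≫
        Limits.prod.map (𝟙 (Hom c d)) (comp a b c) ≫ comp a c d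

variable {V}

/-- The morphism `π₁ : ∐_{(a,b,c)} M(b,c) ⨯ M(a,b) ⟶ ∐_{(a,b)} M(a,b)` which on
the `(a,b,c)`-component is the first projection followed by the coprojection
indexed by `(b,c)`. -/
noncomputable def pi1 (M : EnrichedCat V) :
    (∐ fun p : M.Obj × M.Obj × M.Obj => M.Hom p.2.1 p.2.2 ⨯ M.Hom p.1 p.2.1) ⟶
      ∐ fun q : M.Obj × M.Obj => M.Hom q.1 q.2 :=
  Sigma.desc fun p => Limits.prod.fst ≫
    Sigma.ι (fun q : M.Obj × M.Obj => M.Hom q.1 q.2) (p.2.1, p.2.2)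

/-- The morphism `π₂ : ∐_{(a,b,c)} M(b,c) ⨯ M(a,b) ⟶ ∐_{(a,b)} M(a,b)` which on
the `(a,b,c)`-component is the second projection followed by the coprojection
indexed by `(a,b)`. -/
noncomputable def pi2 (M : EnrichedCat V) :
    (∐ fun p : M.Obj × M.Obj × M.Obj => M.Hom p.2.1 p.2.2 ⨯ M.Hom p.1 p.2.1) ⟶
      ∐ fun q : M.Obj × M.Obj => M.Hom q.1 q.2 :=
  Sigma.desc fun p => Limits.prod.snd ≫
    Sigma.ι (fun q : M.Obj × M.Obj => M.Hom q.1 q.2) (p.1, p.2.1)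

/-- The morphism `comp : ∐_{(a,b,c)} M(b,c) ⨯ M(a,b) ⟶ ∐_{(a,b)} M(a,b)` which
on the `(a,b,c)`-component is the enriched composition followed by the
coprojection indexed by `(a,c)`. -/
noncomputable def ecmp (M : EnrichedCat V) :
    (∐ fun p : M.Obj × M.Obj × M.Obj => M.Hom p.2.1 p.2.2 ⨯ M.Hom p.1 p.2.1) ⟶
      ∐ fun q : M.Obj × M.Obj => M.Hom q.1 q.2 :=
  Sigma.desc fun p => M.comp p.1 p.2.1 p.2.2 ≫
    Sigma.ι (fun q : M.Obj × M.Obj => M.Hom q.1 q.2) (p.1, p.2.2)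

variable (V)

/-- `ε : E ⟶ X` is a joint equalizer of the three parallel morphisms
`f, g, h : X ⟶ Y`: it equalizes them and is universal among morphisms doing so. -/
def IsJointEqualizer {E X Y : V} (f g h : X ⟶ Y) (ε : E ⟶ X) : Prop :=
  ε ≫ f = ε ≫ g ∧ ε ≫ f = ε ≫ h ∧
    ∀ ⦃Z : V⦄ (k : Z ⟶ X), k ≫ f = k ≫ g → k ≫ f = k ≫ h →
      ∃! l : Z ⟶ E, l ≫ ε = k


section AuxLemmas
variable {V}

/-- Any object admitting a morphism to the initial object is itself initial
(strictness of the initial object, from universality of coproducts). -/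
noncomputable def aux_isInitial [HasInitial V] (huniv : UniversalCoproducts V)
    {A : V} (t : A ⟶ ⊥_ V) : IsInitial A := by
  set y : PEmpty.{v+1} → V := fun e => e.elim with hy
  have h : IsIso (Sigma.desc (fun e : PEmpty.{v+1} => (e.elim : y e ⟶ A))) :=
    huniv y A (t ≫ initial.to _) y (fun e => e.elim) (fun e => e.elim) (fun e => e.elim)
  refine IsInitial.ofUniqueHom
    (fun W => inv (Sigma.desc (fun e : PEmpty.{v+1} => (e.elim : y e ⟶ A))) ≫
      Sigma.desc (fun e => (e.elim : y e ⟶ W))) (fun W m => ?_)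
  rw [← IsIso.inv_comp_eq]
  exact Sigma.hom_ext _ _ (fun e => e.elim)

/-- Coprojections of coproducts are monomorphisms. -/
lemma aux_mono [HasInitial V] (huniv : UniversalCoproducts V)
    {I : Type v} (x : I → V) (i : I) : Mono (Sigma.ι x i) := by
  classical
  constructor
  intro T g h w
  set y : I → V := fun j => pullback (Sigma.ι x j) (Sigma.ι x i) with hy
  have hφ : IsIso (Sigma.desc fun j => pullback.snd (Sigma.ι x j) (Sigma.ι x i)) :=
    huniv x (x i) (Sigma.ι x i) y _ _ (fun j => IsPullback.of_hasPullback _ _)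
  set φ : (∐ y) ⟶ x i := Sigma.desc fun j => pullback.snd (Sigma.ι x j) (Sigma.ι x i) with hφdef
  set c : x i ⟶ y i := pullback.lift (𝟙 (x i)) (𝟙 (x i)) rfl with hc
  have hcinv : c ≫ Sigma.ι y i = inv φ := by
    refine IsIso.eq_inv_of_inv_hom_id ?_
    rw [Category.assoc, hφdef, Sigma.ι_desc, hc]
    exact pullback.lift_snd _ _ _
  set p' : ∀ j, y j ⟶ x i := fun j =>
    if hj : j = i then eqToHom (by rw [hj]) ≫ pullback.fst (Sigma.ι x i) (Sigma.ι x i)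
    else pullback.snd _ _ with hp'
  set q' : ∀ j, y j ⟶ x j := fun j =>
    if hj : j = i then
      (eqToHom (by rw [hj]) ≫ pullback.snd (Sigma.ι x i) (Sigma.ι x i)) ≫ eqToHom (by rw [hj])
    else pullback.fst _ _ with hq'
  have hsq : ∀ j, IsPullback (q' j) (p' j) (Sigma.ι x j) (Sigma.ι x i) := by
    intro j
    by_cases hj : j = i
    · subst hj
      simp only [hp', hq', dif_pos, eqToHom_refl, Category.id_comp, Category.comp_id]
      exact (IsPullback.of_hasPullback _ _).flip
    · simp only [hp', hq', dif_neg hj]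
      exact IsPullback.of_hasPullback _ _
  have hφ' : IsIso (Sigma.desc p') := huniv x (x i) (Sigma.ι x i) y p' q' hsq
  set φ' : (∐ y) ⟶ x i := Sigma.desc p' with hφ'def
  have hstep : φ ≫ c ≫ Sigma.ι y i = 𝟙 (∐ y) := by
    rw [hcinv]
    simp
  have e1 : Sigma.ι y i ≫ φ = pullback.snd (Sigma.ι x i) (Sigma.ι x i) := by
    rw [hφdef, Sigma.ι_desc]
  have e2 : Sigma.ι y i ≫ φ' = pullback.fst (Sigma.ι x i) (Sigma.ι x i) := by
    rw [hφ'def, Sigma.ι_desc]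
    simp [hp']
  have hrs : pullback.fst (Sigma.ι x i) (Sigma.ι x i)
      = pullback.snd (Sigma.ι x i) (Sigma.ι x i) := by
    have key : Sigma.ι y i ≫ (φ ≫ c ≫ Sigma.ι y i) ≫ φ' = Sigma.ι y i ≫ 𝟙 _ ≫ φ' := by
      rw [hstep]
    simp only [Category.id_comp, Category.assoc] at key
    rw [e2] at key
    rw [← Category.assoc, e1] at key
    rw [hc] at key
    erw [pullback.lift_fst, Category.comp_id] at key
    exact key.symm
  have := pullback.lift_fst g h w
  rw [hrs, pullback.lift_snd] at this
  exact this.symm ▸ rfl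

/-- A coproduct of monomorphisms along an injective reindexing of summands is a
monomorphism. -/
lemma aux_mono_desc [HasInitial V] (huniv : UniversalCoproducts V)
    (hdisj : DisjointCoproducts V) {I J : Type v} (x : I → V) (y : J → V)
    (σ : J → I) (hσ : Function.Injective σ) (g : ∀ j, y j ⟶ x (σ j)) (hg : ∀ j, Mono (g j)) :
    Mono (Sigma.desc fun j => g j ≫ Sigma.ι x (σ j)) := by
  set G := Sigma.desc fun j => g j ≫ Sigma.ι x (σ j) with hG
  constructor
  intro T u v w
  have hdT : IsIso (Sigma.desc fun j => (pullback.snd (Sigma.ι y j) u : _ ⟶ T)) :=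
    huniv y T u _ _ _ fun j => IsPullback.of_hasPullback _ _
  rw [← cancel_epi (Sigma.desc fun j => (pullback.snd (Sigma.ι y j) u : _ ⟶ T))]
  refine Sigma.hom_ext _ _ fun j => ?_
  simp only [← Category.assoc, Sigma.ι_desc]
  set s := pullback.snd (Sigma.ι y j) u with hs
  set r := pullback.fst (Sigma.ι y j) u with hr
  have hdS : IsIso (Sigma.desc fun j' => (pullback.snd (Sigma.ι y j') (s ≫ v) : _ ⟶ _)) :=
    huniv y _ (s ≫ v) _ _ _ fun j' => IsPullback.of_hasPullback _ _
  rw [← cancel_epi (Sigma.desc fun j' => (pullback.snd (Sigma.ι y j') (s ≫ v) : _ ⟶ _))]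
  refine Sigma.hom_ext _ _ fun j' => ?_
  simp only [← Category.assoc, Sigma.ι_desc]
  simp only [Category.assoc]
  set s' := pullback.snd (Sigma.ι y j') (s ≫ v) with hs'
  set r' := pullback.fst (Sigma.ι y j') (s ≫ v) with hr'
  have h1 : s' ≫ s ≫ u ≫ G = s' ≫ r ≫ g j ≫ Sigma.ι x (σ j) := by
    rw [← pullback.condition_assoc, hG]
    simp
    rfl
  have h2 : s' ≫ s ≫ v ≫ G = r' ≫ g j' ≫ Sigma.ι x (σ j') := by
    rw [← Category.assoc s v, ← pullback.condition_assoc, hG]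
    simp
    rfl
  have h3 : s' ≫ s ≫ u ≫ G = s' ≫ s ≫ v ≫ G := by rw [w]
  have E : s' ≫ r ≫ g j ≫ Sigma.ι x (σ j) = r' ≫ g j' ≫ Sigma.ι x (σ j') :=
    h1.symm.trans (h3.trans h2)
  by_cases hj : j' = j
  · subst hj
    haveI := aux_mono huniv x (σ j')
    haveI := hg j'
    simp only [← Category.assoc] at E
    have e4 : s' ≫ r = r' := (cancel_mono (g j')).1 ((cancel_mono (Sigma.ι x (σ j'))).1 E)
    calc s' ≫ s ≫ u = (s' ≫ r) ≫ Sigma.ι y j' := by rw [Category.assoc, pullback.condition]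
      _ = r' ≫ Sigma.ι y j' := by rw [e4]
      _ = s' ≫ s ≫ v := pullback.condition
  · have hne : σ j' ≠ σ j := fun e => hj (hσ e)
    have hI := aux_isInitial huniv
      ((hdisj x (σ j') (σ j) hne).lift (r' ≫ g j') (s' ≫ r ≫ g j)
        (by simp only [Category.assoc]; rw [← E]))
    exact hI.hom_ext _ _

end AuxLemmas

set_option maxHeartbeats 1000000 in
/-- the joint equalizer `E` of `π₁`, `π₂` and `comp` is isomorphic
to the coproduct, over the objects `a` of `M`, of the equalizers of
`⟨id, id⟩ ≫ ∘_{aaa}` and the identity of `M(a,a)`. -/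
theorem jointEqualizer_iso_coproduct_of_idempotent_objects
    [HasInitial V]
    (huniv : UniversalCoproducts V) (hdisj : DisjointCoproducts V)
    (M : EnrichedCat V) (E : V)
    (ε : E ⟶ ∐ fun p : M.Obj × M.Obj × M.Obj => M.Hom p.2.1 p.2.2 ⨯ M.Hom p.1 p.2.1)
    (hE : IsJointEqualizer V (pi1 M) (pi2 M) (ecmp M) ε) :
    Nonempty (E ≅ ∐ fun a : M.Obj =>
      equalizer (prod.lift (𝟙 (M.Hom a a)) (𝟙 (M.Hom a a)) ≫ M.comp a a a)
        (𝟙 (M.Hom a a))) := by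
  classical
  set EqF : M.Obj → V := fun a =>
    equalizer (prod.lift (𝟙 (M.Hom a a)) (𝟙 (M.Hom a a)) ≫ M.comp a a a)
      (𝟙 (M.Hom a a)) with hEqF
  obtain ⟨hE1, hE2, hE3⟩ := hE
  set g0 : ∀ a : M.Obj, EqF a ⟶ (M.Hom a a ⨯ M.Hom a a) := fun a =>
    equalizer.ι _ _ ≫ prod.lift (𝟙 (M.Hom a a)) (𝟙 (M.Hom a a)) with hg0
  have hg0mono : ∀ a, Mono (g0 a) := by
    intro a
    have h2 : Mono (prod.lift (𝟙 (M.Hom a a)) (𝟙 (M.Hom a a))) :=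
      ⟨fun f g h => by have h' := h =≫ prod.fst; simp only [Category.assoc] at h'; erw [prod.lift_fst] at h'; simpa using h'⟩
    rw [hg0]
    exact mono_comp _ _
  set ε' : (∐ EqF) ⟶ ∐ (fun p : M.Obj × M.Obj × M.Obj => M.Hom p.2.1 p.2.2 ⨯ M.Hom p.1 p.2.1) :=
    Sigma.desc (fun a => g0 a ≫ Sigma.ι (fun p : M.Obj × M.Obj × M.Obj => M.Hom p.2.1 p.2.2 ⨯ M.Hom p.1 p.2.1) (a, a, a)) with hε'
  haveI hmono : Mono ε' :=
    aux_mono_desc huniv hdisj (fun p : M.Obj × M.Obj × M.Obj => M.Hom p.2.1 p.2.2 ⨯ M.Hom p.1 p.2.1) EqF (fun a => (a, a, a))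
      (fun a b h => congrArg (fun z : M.Obj × M.Obj × M.Obj => z.1) h) g0 hg0mono
  -- ε' equalizes pi1, pi2
  have c1 : ε' ≫ pi1 M = ε' ≫ pi2 M := by
    rw [hε']
    refine Sigma.hom_ext _ _ fun a => ?_
    simp only [← Category.assoc, Sigma.ι_desc]
    simp only [Category.assoc, pi1, pi2, Sigma.ι_desc, hg0]
    erw [prod.lift_fst_assoc, prod.lift_snd_assoc]
  have c2 : ε' ≫ pi1 M = ε' ≫ ecmp M := by
    rw [hε']
    refine Sigma.hom_ext _ _ fun a => ?_
    simp only [← Category.assoc, Sigma.ι_desc]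
    simp only [Category.assoc, pi1, ecmp, Sigma.ι_desc, hg0]
    have hcondeq := equalizer.condition
      (prod.lift (𝟙 (M.Hom a a)) (𝟙 (M.Hom a a)) ≫ M.comp a a a) (𝟙 (M.Hom a a))
    simp only [Category.comp_id] at hcondeq
    have hc2' := hcondeq =≫ Sigma.ι (fun q : M.Obj × M.Obj => M.Hom q.1 q.2) (a, a)
    simp only [Category.assoc] at hc2'
    simp only [Category.assoc, prod.lift_fst_assoc, Category.id_comp]
    exact hc2'.symm
  -- universal property of ε'
  have c3 : ∀ ⦃Z : V⦄ (k : Z ⟶ ∐ (fun p : M.Obj × M.Obj × M.Obj => M.Hom p.2.1 p.2.2 ⨯ M.Hom p.1 p.2.1)), k ≫ pi1 M = k ≫ pi2 M →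
      k ≫ pi1 M = k ≫ ecmp M → ∃! l : Z ⟶ ∐ EqF, l ≫ ε' = k := by
    intro Z k hk1 hk2
    have key : ∀ p : M.Obj × M.Obj × M.Obj,
        ∃ m : pullback (Sigma.ι (fun p : M.Obj × M.Obj × M.Obj => M.Hom p.2.1 p.2.2 ⨯ M.Hom p.1 p.2.1) p) k ⟶ ∐ EqF,
          m ≫ ε' = pullback.snd (Sigma.ι (fun p : M.Obj × M.Obj × M.Obj => M.Hom p.2.1 p.2.2 ⨯ M.Hom p.1 p.2.1) p) k ≫ k := by
      rintro ⟨a, b, c⟩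
      have hq1 : pullback.snd (Sigma.ι (fun p : M.Obj × M.Obj × M.Obj => M.Hom p.2.1 p.2.2 ⨯ M.Hom p.1 p.2.1) (a, b, c)) k ≫ k ≫ pi1 M
          = pullback.fst (Sigma.ι (fun p : M.Obj × M.Obj × M.Obj => M.Hom p.2.1 p.2.2 ⨯ M.Hom p.1 p.2.1) (a, b, c)) k ≫
            (prod.fst : M.Hom b c ⨯ M.Hom a b ⟶ M.Hom b c) ≫ Sigma.ι (fun q : M.Obj × M.Obj => M.Hom q.1 q.2) (b, c) := by
        rw [← pullback.condition_assoc]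
        simp [pi1]
      have hq2 : pullback.snd (Sigma.ι (fun p : M.Obj × M.Obj × M.Obj => M.Hom p.2.1 p.2.2 ⨯ M.Hom p.1 p.2.1) (a, b, c)) k ≫ k ≫ pi2 M
          = pullback.fst (Sigma.ι (fun p : M.Obj × M.Obj × M.Obj => M.Hom p.2.1 p.2.2 ⨯ M.Hom p.1 p.2.1) (a, b, c)) k ≫
            (prod.snd : M.Hom b c ⨯ M.Hom a b ⟶ M.Hom a b) ≫ Sigma.ι (fun q : M.Obj × M.Obj => M.Hom q.1 q.2) (a, b) := by
        rw [← pullback.condition_assoc]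
        simp [pi2]
      have hq3 : pullback.snd (Sigma.ι (fun p : M.Obj × M.Obj × M.Obj => M.Hom p.2.1 p.2.2 ⨯ M.Hom p.1 p.2.1) (a, b, c)) k ≫ k ≫ ecmp M
          = pullback.fst (Sigma.ι (fun p : M.Obj × M.Obj × M.Obj => M.Hom p.2.1 p.2.2 ⨯ M.Hom p.1 p.2.1) (a, b, c)) k ≫
            M.comp a b c ≫ Sigma.ι (fun q : M.Obj × M.Obj => M.Hom q.1 q.2) (a, c) := by
        rw [← pullback.condition_assoc]
        simp [ecmp]
      have h12 : pullback.fst (Sigma.ι (fun p : M.Obj × M.Obj × M.Obj => M.Hom p.2.1 p.2.2 ⨯ M.Hom p.1 p.2.1) (a, b, c)) k ≫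
            (prod.fst : M.Hom b c ⨯ M.Hom a b ⟶ M.Hom b c) ≫ Sigma.ι (fun q : M.Obj × M.Obj => M.Hom q.1 q.2) (b, c)
          = pullback.fst (Sigma.ι (fun p : M.Obj × M.Obj × M.Obj => M.Hom p.2.1 p.2.2 ⨯ M.Hom p.1 p.2.1) (a, b, c)) k ≫
            (prod.snd : M.Hom b c ⨯ M.Hom a b ⟶ M.Hom a b) ≫ Sigma.ι (fun q : M.Obj × M.Obj => M.Hom q.1 q.2) (a, b) := by
        rw [← hq1, ← hq2, hk1]
      have h13 : pullback.fst (Sigma.ι (fun p : M.Obj × M.Obj × M.Obj => M.Hom p.2.1 p.2.2 ⨯ M.Hom p.1 p.2.1) (a, b, c)) k ≫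
            (prod.fst : M.Hom b c ⨯ M.Hom a b ⟶ M.Hom b c) ≫ Sigma.ι (fun q : M.Obj × M.Obj => M.Hom q.1 q.2) (b, c)
          = pullback.fst (Sigma.ι (fun p : M.Obj × M.Obj × M.Obj => M.Hom p.2.1 p.2.2 ⨯ M.Hom p.1 p.2.1) (a, b, c)) k ≫
            M.comp a b c ≫ Sigma.ι (fun q : M.Obj × M.Obj => M.Hom q.1 q.2) (a, c) := by
        rw [← hq1, ← hq3, hk2]
      by_cases hab : a = b
      · by_cases hbc : b = c
        · subst hab
          subst hbc
          haveI := aux_mono huniv (fun q : M.Obj × M.Obj => M.Hom q.1 q.2) (a, a)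
          have hA : pullback.fst (Sigma.ι (fun p : M.Obj × M.Obj × M.Obj => M.Hom p.2.1 p.2.2 ⨯ M.Hom p.1 p.2.1) (a, a, a)) k ≫
                (prod.fst : M.Hom a a ⨯ M.Hom a a ⟶ M.Hom a a)
              = pullback.fst (Sigma.ι (fun p : M.Obj × M.Obj × M.Obj => M.Hom p.2.1 p.2.2 ⨯ M.Hom p.1 p.2.1) (a, a, a)) k ≫ prod.snd := by
            have h' := h12
            simp only [← Category.assoc] at h'
            exact (cancel_mono _).1 h'
          have hB : pullback.fst (Sigma.ι (fun p : M.Obj × M.Obj × M.Obj => M.Hom p.2.1 p.2.2 ⨯ M.Hom p.1 p.2.1) (a, a, a)) k ≫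
                (prod.fst : M.Hom a a ⨯ M.Hom a a ⟶ M.Hom a a)
              = pullback.fst (Sigma.ι (fun p : M.Obj × M.Obj × M.Obj => M.Hom p.2.1 p.2.2 ⨯ M.Hom p.1 p.2.1) (a, a, a)) k ≫ M.comp a a a := by
            have h' := h13
            simp only [← Category.assoc] at h'
            exact (cancel_mono _).1 h'
          have hliftcollapse : prod.lift
              (pullback.fst (Sigma.ι (fun p : M.Obj × M.Obj × M.Obj => M.Hom p.2.1 p.2.2 ⨯ M.Hom p.1 p.2.1) (a, a, a)) k ≫
                (prod.fst : M.Hom a a ⨯ M.Hom a a ⟶ M.Hom a a))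
              (pullback.fst (Sigma.ι (fun p : M.Obj × M.Obj × M.Obj => M.Hom p.2.1 p.2.2 ⨯ M.Hom p.1 p.2.1) (a, a, a)) k ≫
                (prod.fst : M.Hom a a ⨯ M.Hom a a ⟶ M.Hom a a))
            = pullback.fst (Sigma.ι (fun p : M.Obj × M.Obj × M.Obj => M.Hom p.2.1 p.2.2 ⨯ M.Hom p.1 p.2.1) (a, a, a)) k := by
            nth_rewrite 2 [hA]
            rw [← prod.comp_lift, prod.lift_fst_snd, Category.comp_id]
          have hcond : (pullback.fst (Sigma.ι (fun p : M.Obj × M.Obj × M.Obj => M.Hom p.2.1 p.2.2 ⨯ M.Hom p.1 p.2.1) (a, a, a)) k ≫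
                (prod.fst : M.Hom a a ⨯ M.Hom a a ⟶ M.Hom a a)) ≫
                (prod.lift (𝟙 (M.Hom a a)) (𝟙 (M.Hom a a)) ≫ M.comp a a a)
              = (pullback.fst (Sigma.ι (fun p : M.Obj × M.Obj × M.Obj => M.Hom p.2.1 p.2.2 ⨯ M.Hom p.1 p.2.1) (a, a, a)) k ≫
                (prod.fst : M.Hom a a ⨯ M.Hom a a ⟶ M.Hom a a)) ≫ 𝟙 (M.Hom a a) := by
            rw [Category.comp_id, ← Category.assoc, prod.comp_lift,
              Category.comp_id, hliftcollapse]
            exact hB.symm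
          refine ⟨equalizer.lift (pullback.fst (Sigma.ι (fun p : M.Obj × M.Obj × M.Obj => M.Hom p.2.1 p.2.2 ⨯ M.Hom p.1 p.2.1) (a, a, a)) k ≫
            (prod.fst : M.Hom a a ⨯ M.Hom a a ⟶ M.Hom a a)) hcond ≫ Sigma.ι EqF a, ?_⟩
          rw [hε', Category.assoc, Sigma.ι_desc, hg0, ← Category.assoc, ← Category.assoc]
          rw [show (equalizer.lift _ hcond ≫ equalizer.ι _ _) = pullback.fst
            (Sigma.ι (fun p : M.Obj × M.Obj × M.Obj => M.Hom p.2.1 p.2.2 ⨯ M.Hom p.1 p.2.1) (a, a, a)) k ≫ (prod.fst : M.Hom a a ⨯ M.Hom a a ⟶ M.Hom a a)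
            from equalizer.lift_ι _ _]
          rw [prod.comp_lift, Category.comp_id, hliftcollapse]
          exact pullback.condition
        · have hne : ((b, c) : M.Obj × M.Obj) ≠ (a, b) := fun h =>
            hbc ((congrArg (fun z : M.Obj × M.Obj => z.2) h).symm)
          have hI := aux_isInitial huniv
            ((hdisj (fun q : M.Obj × M.Obj => M.Hom q.1 q.2) (b, c) (a, b) hne).lift
              (pullback.fst (Sigma.ι (fun p : M.Obj × M.Obj × M.Obj => M.Hom p.2.1 p.2.2 ⨯ M.Hom p.1 p.2.1) (a, b, c)) k ≫ prod.fst)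
              (pullback.fst (Sigma.ι (fun p : M.Obj × M.Obj × M.Obj => M.Hom p.2.1 p.2.2 ⨯ M.Hom p.1 p.2.1) (a, b, c)) k ≫ prod.snd)
              (by simp only [Category.assoc]; exact h12))
          exact ⟨hI.to _, hI.hom_ext _ _⟩
      · have hne : ((b, c) : M.Obj × M.Obj) ≠ (a, b) := fun h =>
          hab ((congrArg (fun z : M.Obj × M.Obj => z.1) h).symm)
        have hI := aux_isInitial huniv
          ((hdisj (fun q : M.Obj × M.Obj => M.Hom q.1 q.2) (b, c) (a, b) hne).lift
            (pullback.fst (Sigma.ι (fun p : M.Obj × M.Obj × M.Obj => M.Hom p.2.1 p.2.2 ⨯ M.Hom p.1 p.2.1) (a, b, c)) k ≫ prod.fst)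
            (pullback.fst (Sigma.ι (fun p : M.Obj × M.Obj × M.Obj => M.Hom p.2.1 p.2.2 ⨯ M.Hom p.1 p.2.1) (a, b, c)) k ≫ prod.snd)
            (by simp only [Category.assoc]; exact h12))
        exact ⟨hI.to _, hI.hom_ext _ _⟩
    choose m hm using key
    haveI hdZ : IsIso (Sigma.desc fun p => pullback.snd (Sigma.ι (fun p : M.Obj × M.Obj × M.Obj => M.Hom p.2.1 p.2.2 ⨯ M.Hom p.1 p.2.1) p) k) :=
      huniv (fun p : M.Obj × M.Obj × M.Obj => M.Hom p.2.1 p.2.2 ⨯ M.Hom p.1 p.2.1) Z k _ _ _ fun p => IsPullback.of_hasPullback _ _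
    have hfac : (inv (Sigma.desc fun p => pullback.snd (Sigma.ι (fun p : M.Obj × M.Obj × M.Obj => M.Hom p.2.1 p.2.2 ⨯ M.Hom p.1 p.2.1) p) k) ≫
        Sigma.desc m) ≫ ε' = k := by
      rw [Category.assoc, IsIso.inv_comp_eq]
      refine Sigma.hom_ext _ _ fun p => ?_
      simp only [← Category.assoc, Sigma.ι_desc]
      exact hm p
    exact ⟨_, hfac, fun l' hl' => (cancel_mono ε').1 (hl'.trans hfac.symm)⟩
  -- combine the two joint equalizers
  obtain ⟨l, hl, hlu⟩ := c3 ε hE1 hE2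
  obtain ⟨l', hl', hl'u⟩ := hE3 ε' c1 c2
  obtain ⟨t, ht, htu⟩ := hE3 ε hE1 hE2
  obtain ⟨t', ht', ht'u⟩ := c3 ε' c1 c2
  refine ⟨⟨l, l', ?_, ?_⟩⟩
  · calc l ≫ l' = t := htu _ (by show (l ≫ l') ≫ ε = ε; rw [Category.assoc, hl', hl])
      _ = 𝟙 E := (htu (𝟙 E) (Category.id_comp ε)).symm
  · calc l' ≫ l = t' := ht'u _ (by show (l' ≫ l) ≫ ε' = ε'; rw [Category.assoc, hl, hl'])
      _ = 𝟙 (∐ EqF) := (ht'u (𝟙 _) (Category.id_comp ε')).symm
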